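/- arXiv:2205.01808 — 2 statements merged into one kernel-verified Lean document; each statement's English description precedes it below -/
import Mathlib

section
/- Suppose λ = 0, so that tr A = 0 and det A = μ² > 0. Then the linear control system is controllable: for all v, w ∈ ℝ², one has w ∈ R⁺(v). -/
noncomputable section

open Real Set RealInnerProductSpace

/-- The Euclidean plane. -/
abbrev E2 : Type := EuclideanSpace ℝ (Fin 2)

/-- The vector `(a, b)` in the Euclidean plane. -/
def vec2 (a b : ℝ) : E2 := WithLp.toLp 2 ![a, b]

/-- Counterclockwise rotation of angle `φ`. -/
def rotMap (φ : ℝ) (v : E2) : E2 :=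
  vec2 (Real.cos φ * v 0 - Real.sin φ * v 1) (Real.sin φ * v 0 + Real.cos φ * v 1)

/-- `θ`, the counterclockwise rotation by `π/2`. -/
def thetaMap (v : E2) : E2 := vec2 (-(v 1)) (v 0)

/-- The linear map with matrix `A = ((l, -m), (m, l))`. -/
def Amap (l m : ℝ) (v : E2) : E2 := vec2 (l * v 0 - m * v 1) (m * v 0 + l * v 1)

/-- The inverse `A⁻¹` of the matrix `A = ((l, -m), (m, l))` (with `det A = l² + m² ≠ 0`). -/
def AinvMap (l m : ℝ) (v : E2) : E2 :=
  (1 / (l ^ 2 + m ^ 2)) • vec2 (l * v 0 + m * v 1) (-m * v 0 + l * v 1)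

/-- The matrix exponential `e^{τA} = e^{τl} R_{τm}` for `A = ((l, -m), (m, l))`. -/
def expA (l m τ : ℝ) (v : E2) : E2 := Real.exp (τ * l) • rotMap (τ * m) v

/-- The equilibrium `v(u) = -u A⁻¹ η`. -/
def equil (l m : ℝ) (η : E2) (u : ℝ) : E2 := (-u) • AinvMap l m η

/-- The solution `φ(s, v, u) = e^{sA}(v - v(u)) + v(u)` of `ẋ = Ax + uη` for constant control. -/
def phi (l m : ℝ) (η : E2) (s : ℝ) (v : E2) (u : ℝ) : E2 :=
  expA l m s (v - equil l m η u) + equil l m η u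

/-- The spiral `φ_A(τ, v₁, v₂) = e^{τA}(v₁ - v₂) + v₂`. -/
def phiA (l m : ℝ) (τ : ℝ) (v₁ v₂ : E2) : E2 := expA l m τ (v₁ - v₂) + v₂

/-- The region `C_A(v₁, v₂)`. -/
def CA (l m : ℝ) (v₁ v₂ : E2) : Set E2 :=
  {v | 0 ≤ ⟪v - v₂, thetaMap (v₁ - v₂)⟫ ∧
    ∀ τ ∈ Icc (0 : ℝ) (π / m),
      0 ≤ ⟪v - phiA l m τ v₁ v₂, thetaMap (Amap l m (expA l m τ (v₁ - v₂)))⟫}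

/-- Concatenated solution associated to a finite list of (time, control) pairs. -/
def trajComp (l m : ℝ) (η : E2) : E2 → List (ℝ × ℝ) → E2
  | v, [] => v
  | v, p :: rest => trajComp l m η (phi l m η p.1 v p.2) rest

/-- The forward reachable set `R⁺(v)`. -/
def ReachPlus (l m : ℝ) (η : E2) (Ω : Set ℝ) (v : E2) : Set E2 :=
  {w | ∃ L : List (ℝ × ℝ), (∀ p ∈ L, 0 ≤ p.1 ∧ p.2 ∈ Ω) ∧ w = trajComp l m η v L}

/-- The backward reachable set `R⁻(v)` (forward reachable set of the time-reversed system). -/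
def ReachMinus (l m : ℝ) (η : E2) (Ω : Set ℝ) (v : E2) : Set E2 :=
  {w | ∃ L : List (ℝ × ℝ), (∀ p ∈ L, p.1 ≤ 0 ∧ p.2 ∈ Ω) ∧ w = trajComp l m η v L}

/-- An admissible trajectory of the system starting at `v`. -/
def IsAdmissibleTraj (l m : ℝ) (η : E2) (Ω : Set ℝ) (v : E2) (x : ℝ → E2) : Prop :=
  x 0 = v ∧
  ∃ t : ℕ → ℝ, t 0 = 0 ∧ StrictMono t ∧ (∀ M : ℝ, ∃ n, M < t n) ∧
    ∃ u : ℕ → ℝ, (∀ k, u k ∈ Ω) ∧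
      ∀ k, ∀ s ∈ Icc (t k) (t (k + 1)), x s = phi l m η (s - t k) (x (t k)) (u k)

/-- An admissible trajectory of the time-reversed system starting at `v`. -/
def IsAdmissibleTrajRev (l m : ℝ) (η : E2) (Ω : Set ℝ) (v : E2) (x : ℝ → E2) : Prop :=
  x 0 = v ∧
  ∃ t : ℕ → ℝ, t 0 = 0 ∧ StrictMono t ∧ (∀ M : ℝ, ∃ n, M < t n) ∧
    ∃ u : ℕ → ℝ, (∀ k, u k ∈ Ω) ∧
      ∀ k, ∀ s ∈ Icc (t k) (t (k + 1)), x s = phi l m η (-(s - t k)) (x (t k)) (u k)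

/-- Conditions (a) and (b) of the definition of a control set. -/
def ControlSetAxioms (l m : ℝ) (η : E2) (Ω : Set ℝ) (D : Set E2) : Prop :=
  (∀ v ∈ D, ∃ x : ℝ → E2, IsAdmissibleTraj l m η Ω v x ∧ ∀ s : ℝ, 0 ≤ s → x s ∈ D) ∧
  ∀ v ∈ D, D ⊆ closure (ReachPlus l m η Ω v)

/-- A control set: a set satisfying (a) and (b), maximal with respect to set inclusion. -/
def IsControlSet (l m : ℝ) (η : E2) (Ω : Set ℝ) (D : Set E2) : Prop :=
  ControlSetAxioms l m η Ω D ∧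
    ∀ D' : Set E2, ControlSetAxioms l m η Ω D' → D ⊆ D' → D' = D

/-- Conditions (a) and (b) of the definition of a control set of the time-reversed system. -/
def ControlSetAxiomsRev (l m : ℝ) (η : E2) (Ω : Set ℝ) (D : Set E2) : Prop :=
  (∀ v ∈ D, ∃ x : ℝ → E2, IsAdmissibleTrajRev l m η Ω v x ∧ ∀ s : ℝ, 0 ≤ s → x s ∈ D) ∧
  ∀ v ∈ D, D ⊆ closure (ReachMinus l m η Ω v)

/-- A control set of the time-reversed system. -/
def IsControlSetRev (l m : ℝ) (η : E2) (Ω : Set ℝ) (D : Set E2) : Prop :=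
  ControlSetAxiomsRev l m η Ω D ∧
    ∀ D' : Set E2, ControlSetAxiomsRev l m η Ω D' → D ⊆ D' → D' = D

/-- `ρ = e^{πλ/μ}`. -/
def rho (l m : ℝ) : ℝ := Real.exp (π * l / m)

/-- The point `P⁺ = ((-u⁺ + ρ u⁻)/(1 - ρ)) A⁻¹ η`. -/
def Pplus (l m : ℝ) (η : E2) (um up : ℝ) : E2 :=
  ((-up + rho l m * um) / (1 - rho l m)) • AinvMap l m η

/-- The point `P⁻ = ((-u⁻ + ρ u⁺)/(1 - ρ)) A⁻¹ η`. -/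
def Pminus (l m : ℝ) (η : E2) (um up : ℝ) : E2 :=
  ((-um + rho l m * up) / (1 - rho l m)) • AinvMap l m η

/-- The region `C = C_A(P⁺, v(u⁻)) ∪ C_A(P⁻, v(u⁺))`. -/
def regionC (l m : ℝ) (η : E2) (um up : ℝ) : Set E2 :=
  CA l m (Pplus l m η um up) (equil l m η um) ∪ CA l m (Pminus l m η um up) (equil l m η up)

/-- The sequence `P₀ = v(u⁺)`, `P_{2n+1} = φ(π/μ, P_{2n}, u⁻)`, `P_{2n+2} = φ(π/μ, P_{2n+1}, u⁺)`. -/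
def Pseq (l m : ℝ) (η : E2) (um up : ℝ) : ℕ → E2
  | 0 => equil l m η up
  | n + 1 => phi l m η (π / m) (Pseq l m η um up n) (if n % 2 = 0 then um else up)

/-- The periodic orbit `O`. -/
def orbitO (l m : ℝ) (η : E2) (um up : ℝ) : Set E2 :=
  (fun s => phi l m η s (Pplus l m η um up) um) '' Icc (0 : ℝ) (π / m) ∪
    (fun s => phi l m η s (Pminus l m η um up) up) '' Icc (0 : ℝ) (π / m)

/-!
For `λ = 0` the flow of a constant control `u` is the rotation about the equilibrium `v(u)`, and
since angles only matter modulo `2π`, every rotation about `v(u⁻)` or `v(u⁺)` is reachable.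
Rotating by `-θ` about one equilibrium and then by `θ` about the other is a translation, by
`d - R_θ d` or by `R_θ d - d` where `d = v(u⁻) - v(u⁺) ≠ 0`. Hence every chord `R_θ' d - R_θ d`
of the circle of radius `‖d‖`, i.e. every vector of length at most `2‖d‖`, is a reachable
translation, and finitely many of them lead from any point to any other.
-/

lemma mem_of_forall_add_mem_of_norm_le {E : Type*} [NormedAddCommGroup E] [NormedSpace ℝ E]
    (R : E → Set E) (htrans : ∀ x y z, y ∈ R x → z ∈ R y → z ∈ R x) {r : ℝ} (hr : 0 < r)
    (hstep : ∀ x t, ‖t‖ ≤ r → x + t ∈ R x) (v w : E) : w ∈ R v := by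
  obtain ⟨n, hn⟩ := exists_nat_gt (‖w - v‖ / r)
  have hn0 : (0 : ℝ) < n := (div_nonneg (norm_nonneg _) hr.le).trans_lt hn
  set s : E := (n : ℝ)⁻¹ • (w - v)
  have hs : ‖s‖ ≤ r := by
    rw [norm_smul, norm_inv, Real.norm_natCast, inv_mul_le_iff₀ hn0]
    exact ((div_lt_iff₀ hr).1 hn).le
  have hiter : ∀ k : ℕ, v + (k : ℝ) • s ∈ R v := by
    intro k
    induction k with
    | zero => simpa using hstep v 0 (by simpa using hr.le)
    | succ k ih =>
      rw [Nat.cast_succ, add_smul, one_smul, ← add_assoc]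
      exact htrans _ _ _ ih (hstep _ s hs)
  convert hiter n using 1
  rw [smul_inv_smul₀ hn0.ne', add_sub_cancel]

lemma norm_sq_eq_sq_add_sq (x : E2) : ‖x‖ ^ 2 = x 0 ^ 2 + x 1 ^ 2 := by
  simp [EuclideanSpace.real_norm_sq_eq, Fin.sum_univ_two]

section Rotation

@[simp] lemma rotMap_apply_zero (φ : ℝ) (v : E2) :
    rotMap φ v 0 = Real.cos φ * v 0 - Real.sin φ * v 1 := by simp [rotMap, vec2]

@[simp] lemma rotMap_apply_one (φ : ℝ) (v : E2) :
    rotMap φ v 1 = Real.sin φ * v 0 + Real.cos φ * v 1 := by simp [rotMap, vec2]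

lemma rotMap_rotMap (a b : ℝ) (x : E2) : rotMap a (rotMap b x) = rotMap (a + b) x := by
  ext i; fin_cases i <;> simp [Real.cos_add, Real.sin_add] <;> ring

@[simp] lemma rotMap_zero_angle (x : E2) : rotMap 0 x = x := by
  ext i; fin_cases i <;> simp

lemma rotMap_add (φ : ℝ) (x y : E2) : rotMap φ (x + y) = rotMap φ x + rotMap φ y := by
  ext i; fin_cases i <;> simp <;> ring

lemma rotMap_sub (φ : ℝ) (x y : E2) : rotMap φ (x - y) = rotMap φ x - rotMap φ y := by
  ext i; fin_cases i <;> simp <;> ring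

lemma rotMap_neg (φ : ℝ) (x : E2) : rotMap φ (-x) = -rotMap φ x := by
  ext i; fin_cases i <;> simp <;> ring

lemma rotMap_add_int_mul_two_pi (φ : ℝ) (k : ℤ) (x : E2) :
    rotMap (φ + k * (2 * π)) x = rotMap φ x := by
  ext i; fin_cases i <;> simp [Real.cos_add_int_mul_two_pi, Real.sin_add_int_mul_two_pi]

lemma exists_rotMap_eq {d p : E2} (hd : d ≠ 0) (hp : ‖p‖ = ‖d‖) : ∃ θ, rotMap θ d = p := by
  have hD : 0 < d 0 ^ 2 + d 1 ^ 2 := by rw [← norm_sq_eq_sq_add_sq]; positivity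
  replace hp : p 0 ^ 2 + p 1 ^ 2 = d 0 ^ 2 + d 1 ^ 2 := by
    rw [← norm_sq_eq_sq_add_sq, ← norm_sq_eq_sq_add_sq, hp]
  -- `z = p / d` as complex numbers
  set z : ℂ := ⟨(p 0 * d 0 + p 1 * d 1) / (d 0 ^ 2 + d 1 ^ 2),
    (p 1 * d 0 - p 0 * d 1) / (d 0 ^ 2 + d 1 ^ 2)⟩
  have hz : ‖z‖ = 1 := by
    rw [← pow_eq_one_iff_of_nonneg (norm_nonneg z) two_ne_zero, Complex.sq_norm,
      Complex.normSq_mk]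
    field_simp
    nlinarith [hp]
  have hcos := Complex.norm_mul_cos_arg z
  have hsin := Complex.norm_mul_sin_arg z
  rw [hz, one_mul] at hcos hsin
  refine ⟨Complex.arg z, ?_⟩
  ext i; fin_cases i <;> simp [hcos, hsin, z] <;> field_simp <;> nlinarith [hp]

lemma exists_rotMap_sub_rotMap_eq {d t : E2} (hd : d ≠ 0) (ht : ‖t‖ ≤ 2 * ‖d‖) :
    ∃ θ θ', rotMap θ' d - rotMap θ d = t := by
  rcases eq_or_ne t 0 with rfl | ht0
  · exact ⟨0, 0, sub_self _⟩
  have htpos : 0 < ‖t‖ := norm_pos_iff.2 ht0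
  -- the endpoints `∓ t / 2 - c • θ t` of the chord, with `c` chosen so that they lie on the circle
  set c : ℝ := √(‖d‖ ^ 2 - ‖t‖ ^ 2 / 4) / ‖t‖
  have hc : c ^ 2 * ‖t‖ ^ 2 = ‖d‖ ^ 2 - ‖t‖ ^ 2 / 4 := by
    rw [div_pow, Real.sq_sqrt (by nlinarith [norm_nonneg t])]
    field_simp
  have hnorm : ∀ s : ℝ, s ^ 2 = 1 / 4 → ‖s • t - c • thetaMap t‖ = ‖d‖ := by
    intro s hs
    have hsq : ‖s • t - c • thetaMap t‖ ^ 2 = (s ^ 2 + c ^ 2) * ‖t‖ ^ 2 := by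
      rw [norm_sq_eq_sq_add_sq, norm_sq_eq_sq_add_sq]
      simp only [thetaMap, vec2, PiLp.sub_apply, PiLp.smul_apply, smul_eq_mul,
        Matrix.cons_val_zero, Matrix.cons_val_one, Matrix.cons_val_fin_one]
      ring
    rw [← sq_eq_sq₀ (norm_nonneg _) (norm_nonneg _), hsq]
    linear_combination ‖t‖ ^ 2 * hs + hc
  obtain ⟨θ, hθ⟩ := exists_rotMap_eq hd (hnorm (-1 / 2) (by norm_num))
  obtain ⟨θ', hθ'⟩ := exists_rotMap_eq hd (hnorm (1 / 2) (by norm_num))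
  refine ⟨θ, θ', ?_⟩
  rw [hθ, hθ']
  module

end Rotation

lemma Amap_AinvMap {l m : ℝ} (h : l ^ 2 + m ^ 2 ≠ 0) (v : E2) :
    Amap l m (AinvMap l m v) = v := by
  ext i; fin_cases i <;> simp [Amap, AinvMap, vec2] <;> field_simp <;> ring

lemma AinvMap_ne_zero {l m : ℝ} (h : l ^ 2 + m ^ 2 ≠ 0) {η : E2} (hη : η ≠ 0) :
    AinvMap l m η ≠ 0 := by
  intro h0
  apply hη
  rw [← Amap_AinvMap h η, h0]
  ext i; fin_cases i <;> simp [Amap, vec2]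

lemma equil_sub_equil (l m : ℝ) (η : E2) (a b : ℝ) :
    equil l m η a - equil l m η b = (b - a) • AinvMap l m η := by
  simp only [equil]
  module

def rotAbout (c : E2) (φ : ℝ) (v : E2) : E2 := rotMap φ (v - c) + c

lemma rotAbout_rotAbout_neg (a b : E2) (θ : ℝ) (x : E2) :
    rotAbout a θ (rotAbout b (-θ) x) = x + ((a - b) - rotMap θ (a - b)) := by
  rw [rotAbout, rotAbout, add_sub_assoc, rotMap_add, rotMap_rotMap, add_neg_cancel,
    rotMap_zero_angle, ← neg_sub a b, rotMap_neg]
  abel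

section Reachability

variable {l m : ℝ} {η : E2} {Ω : Set ℝ}

lemma trajComp_append (v : E2) (L₁ L₂ : List (ℝ × ℝ)) :
    trajComp l m η v (L₁ ++ L₂) = trajComp l m η (trajComp l m η v L₁) L₂ := by
  induction L₁ generalizing v with
  | nil => rfl
  | cons p rest ih => simp [trajComp, ih]

lemma mem_reachPlus_trans {v v' w : E2} (h₁ : v' ∈ ReachPlus l m η Ω v)
    (h₂ : w ∈ ReachPlus l m η Ω v') : w ∈ ReachPlus l m η Ω v := by
  obtain ⟨L₁, hL₁, rfl⟩ := h₁
  obtain ⟨L₂, hL₂, rfl⟩ := h₂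
  refine ⟨L₁ ++ L₂, fun p hp => ?_, (trajComp_append _ _ _).symm⟩
  rcases List.mem_append.1 hp with h | h
  exacts [hL₁ p h, hL₂ p h]

lemma phi_mem_reachPlus {s u : ℝ} (hs : 0 ≤ s) (hu : u ∈ Ω) (v : E2) :
    phi l m η s v u ∈ ReachPlus l m η Ω v :=
  ⟨[(s, u)], by simpa using ⟨hs, hu⟩, rfl⟩

lemma phi_zero_eq_rotAbout (m : ℝ) (η : E2) (s : ℝ) (v : E2) (u : ℝ) :
    phi 0 m η s v u = rotAbout (equil 0 m η u) (s * m) v := by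
  simp [phi, expA, rotAbout]

-- The angle only matters modulo `2π`, so it can be reached in nonnegative time.
lemma rotAbout_equil_mem_reachPlus (hm : 0 < m) {u : ℝ} (hu : u ∈ Ω) (φ : ℝ) (v : E2) :
    rotAbout (equil 0 m η u) φ v ∈ ReachPlus 0 m η Ω v := by
  obtain ⟨k, hk⟩ : ∃ k : ℕ, -φ / (2 * π) ≤ k := exists_nat_ge _
  have hφk : 0 ≤ φ + (k : ℤ) * (2 * π) := by
    have := (div_le_iff₀ (by positivity : (0 : ℝ) < 2 * π)).1 hk
    push_cast
    linarith
  have hrot : rotAbout (equil 0 m η u) ((φ + (k : ℤ) * (2 * π)) / m * m) v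
      = rotAbout (equil 0 m η u) φ v := by
    rw [div_mul_cancel₀ _ hm.ne', rotAbout, rotAbout, rotMap_add_int_mul_two_pi]
  rw [← hrot, ← phi_zero_eq_rotAbout]
  exact phi_mem_reachPlus (div_nonneg hφk hm.le) hu v

lemma add_sub_rotMap_mem_reachPlus (hm : 0 < m) {a b : ℝ} (ha : a ∈ Ω) (hb : b ∈ Ω)
    (θ : ℝ) (x : E2) :
    x + ((equil 0 m η a - equil 0 m η b) - rotMap θ (equil 0 m η a - equil 0 m η b))
      ∈ ReachPlus 0 m η Ω x := by
  rw [← rotAbout_rotAbout_neg]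
  exact mem_reachPlus_trans (rotAbout_equil_mem_reachPlus hm hb _ x)
    (rotAbout_equil_mem_reachPlus hm ha _ _)

lemma add_rotMap_sub_rotMap_mem_reachPlus (hm : 0 < m) {a b : ℝ} (ha : a ∈ Ω) (hb : b ∈ Ω)
    (θ θ' : ℝ) (x : E2) :
    x + (rotMap θ' (equil 0 m η a - equil 0 m η b) - rotMap θ (equil 0 m η a - equil 0 m η b))
      ∈ ReachPlus 0 m η Ω x := by
  set d := equil 0 m η a - equil 0 m η b
  have hd : equil 0 m η b - equil 0 m η a = -d := (neg_sub _ _).symm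
  have h := add_sub_rotMap_mem_reachPlus (η := η) hm hb ha θ' (x + (d - rotMap θ d))
  rw [hd, rotMap_neg] at h
  convert mem_reachPlus_trans (add_sub_rotMap_mem_reachPlus hm ha hb θ x) h using 1
  abel

end Reachability

/-- if `tr A = 0` (i.e. `λ = 0`) and `det A = μ² > 0`, the system is controllable. -/
theorem stmt3 (l m : ℝ) (hl : l = 0) (hm : 0 < m) (η : E2) (hη : η ≠ 0)
    (um up : ℝ) (hu : um < up) :
    ∀ v w : E2, w ∈ ReachPlus l m η (Icc um up) v := by
  subst hl
  have hd : equil 0 m η um - equil 0 m η up ≠ 0 := by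
    rw [equil_sub_equil]
    exact smul_ne_zero (sub_ne_zero.2 hu.ne') (AinvMap_ne_zero (by positivity) hη)
  refine mem_of_forall_add_mem_of_norm_le _ (fun _ _ _ => mem_reachPlus_trans)
    (mul_pos two_pos (norm_pos_iff.2 hd)) fun x t ht => ?_
  obtain ⟨θ, θ', rfl⟩ := exists_rotMap_sub_rotMap_eq hd ht
  exact add_rotMap_sub_rotMap_mem_reachPlus hm (left_mem_Icc.2 hu.le) (right_mem_Icc.2 hu.le)
    θ θ' x
end
end

section
/- Assume λ < 0 and μ > 0, and set ρ := e^{πλ/μ}. With the sequence P₀ := v(u⁺), P_{2n+1} := φ(π/μ, P_{2n}, u⁻), P_{2n+2} := φ(π/μ, P_{2n+1}, u⁺), one has P_{2n} → P⁺ := ((−u⁺ + ρu⁻)/(1 − ρ)) A⁻¹η and P_{2n+1} → P⁻ := ((−u⁻ + ρu⁺)/(1 − ρ)) A⁻¹η as n → ∞. -/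
noncomputable section

open Real Set RealInnerProductSpace

/-!
At time `π/μ` the flow is a half turn scaled by `ρ`: `e^{(π/μ)A} = -ρ`, so each map
`v ↦ φ(π/μ, v, u)` is affine with linear part `-ρ`. The half turn with control `u⁻` sends `P⁺` to
`P⁻` and the one with `u⁺` sends `P⁻` back to `P⁺`, hence `P_{2n} - P⁺ = ρ^{2n} (P₀ - P⁺)` and
`P_{2n+1} - P⁻ = -ρ (P_{2n} - P⁺)`, and both tend to `0` because `0 < ρ < 1` when `λ < 0 < μ`.
-/

theorem rotMap_pi (v : E2) : rotMap π v = -v := by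
  ext i
  fin_cases i <;> simp [rotMap, vec2]

theorem expA_pi_div (l : ℝ) {m : ℝ} (hm : m ≠ 0) (v : E2) :
    expA l m (π / m) v = -(rho l m • v) := by
  rw [expA, div_mul_cancel₀ π hm, rotMap_pi, rho, smul_neg, div_mul_eq_mul_div]

theorem phi_pi_div (l : ℝ) {m : ℝ} (hm : m ≠ 0) (η v : E2) (u : ℝ) :
    phi l m η (π / m) v u = -(rho l m • v) - ((1 + rho l m) * u) • AinvMap l m η := by
  rw [phi, expA_pi_div l hm, equil]
  module

theorem phi_pi_div_sub (l : ℝ) {m : ℝ} (hm : m ≠ 0) (η v w : E2) (u : ℝ) :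
    phi l m η (π / m) v u - phi l m η (π / m) w u = -(rho l m • (v - w)) := by
  rw [phi_pi_div l hm, phi_pi_div l hm]
  module

theorem phi_pi_div_Pplus (l : ℝ) {m : ℝ} (hm : m ≠ 0) (hρ : rho l m ≠ 1) (η : E2) (um up : ℝ) :
    phi l m η (π / m) (Pplus l m η um up) um = Pminus l m η um up := by
  have h1ρ : 1 - rho l m ≠ 0 := sub_ne_zero.mpr hρ.symm
  rw [phi_pi_div l hm, Pplus, Pminus]
  match_scalars
  field_simp
  ring

theorem phi_pi_div_Pminus (l : ℝ) {m : ℝ} (hm : m ≠ 0) (hρ : rho l m ≠ 1) (η : E2) (um up : ℝ) :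
    phi l m η (π / m) (Pminus l m η um up) up = Pplus l m η um up := by
  have h1ρ : 1 - rho l m ≠ 0 := sub_ne_zero.mpr hρ.symm
  rw [phi_pi_div l hm, Pplus, Pminus]
  match_scalars
  field_simp
  ring

theorem rho_lt_one {l m : ℝ} (hl : l < 0) (hm : 0 < m) : rho l m < 1 :=
  Real.exp_lt_one_iff.mpr (div_neg_of_neg_of_pos (mul_neg_of_pos_of_neg Real.pi_pos hl) hm)

section Pseq

variable (l : ℝ) {m : ℝ} (η : E2) (um up : ℝ)

theorem Pseq_two_mul_add_one_sub_Pminus (hm : m ≠ 0) (hρ : rho l m ≠ 1) (n : ℕ) :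
    Pseq l m η um up (2 * n + 1) - Pminus l m η um up
      = -(rho l m • (Pseq l m η um up (2 * n) - Pplus l m η um up)) := by
  rw [Pseq, if_pos (by omega), ← phi_pi_div_Pplus l hm hρ η um up, phi_pi_div_sub l hm]

theorem Pseq_two_mul_add_two_sub_Pplus (hm : m ≠ 0) (hρ : rho l m ≠ 1) (n : ℕ) :
    Pseq l m η um up (2 * n + 2) - Pplus l m η um up
      = -(rho l m • (Pseq l m η um up (2 * n + 1) - Pminus l m η um up)) := by
  rw [Pseq, if_neg (by omega), ← phi_pi_div_Pminus l hm hρ η um up, phi_pi_div_sub l hm]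

theorem Pseq_two_mul_sub_Pplus (hm : m ≠ 0) (hρ : rho l m ≠ 1) (n : ℕ) :
    Pseq l m η um up (2 * n) - Pplus l m η um up
      = (rho l m ^ 2) ^ n • (equil l m η up - Pplus l m η um up) := by
  induction n with
  | zero => simp [Pseq]
  | succ n ih =>
    rw [Nat.mul_succ, Pseq_two_mul_add_two_sub_Pplus l η um up hm hρ,
      Pseq_two_mul_add_one_sub_Pminus l η um up hm hρ, ih, pow_succ]
    module

end Pseq

theorem stmt5_general (l m : ℝ) (hl : l < 0) (hm : 0 < m) (η : E2)
    (um up : ℝ) :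
    Filter.Tendsto (fun n : ℕ => Pseq l m η um up (2 * n)) Filter.atTop
      (nhds (Pplus l m η um up)) ∧
    Filter.Tendsto (fun n : ℕ => Pseq l m η um up (2 * n + 1)) Filter.atTop
      (nhds (Pminus l m η um up)) := by
  have hρ₁ : rho l m < 1 := rho_lt_one hl hm
  have hρ : rho l m ≠ 1 := hρ₁.ne
  have hm' : m ≠ 0 := hm.ne'
  have hρ_sq : rho l m ^ 2 < 1 := pow_lt_one₀ (Real.exp_pos _).le hρ₁ two_ne_zero
  have h_even : Filter.Tendsto (fun n : ℕ => Pseq l m η um up (2 * n) - Pplus l m η um up)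
      Filter.atTop (nhds 0) := by
    simp only [Pseq_two_mul_sub_Pplus l η um up hm' hρ]
    simpa using (tendsto_pow_atTop_nhds_zero_of_lt_one (sq_nonneg _) hρ_sq).smul_const
      (equil l m η up - Pplus l m η um up)
  have h_odd := (h_even.const_smul (rho l m)).neg
  simp only [← Pseq_two_mul_add_one_sub_Pminus l η um up hm' hρ, smul_zero, neg_zero] at h_odd
  exact ⟨tendsto_sub_nhds_zero_iff.mp h_even, tendsto_sub_nhds_zero_iff.mp h_odd⟩

/-- `P_{2n} → P⁺` and `P_{2n+1} → P⁻` as `n → ∞`. -/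
theorem stmt5 (l m : ℝ) (hl : l < 0) (hm : 0 < m) (η : E2) (hη : η ≠ 0)
    (um up : ℝ) (hu : um < up) :
    Filter.Tendsto (fun n : ℕ => Pseq l m η um up (2 * n)) Filter.atTop
      (nhds (Pplus l m η um up)) ∧
    Filter.Tendsto (fun n : ℕ => Pseq l m η um up (2 * n + 1)) Filter.atTop
      (nhds (Pminus l m η um up)) :=
  stmt5_general l m hl hm η um up
end
end
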